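/- arXiv:2109.14943 — 4 statements merged into one kernel-verified Lean document; each statement's English description precedes it below -/
import Mathlib

section
/- Let S be the interpolation matrix of the FLRS decoder with degree constraint D, built from a received word R = C + E where the error E has sum-rank weight t. Then rk_{q^m}(S) ≤ D + t(h−s+1), and hence the dimension d_I of the right kernel of S satisfies d_I ≥ s(D−k+1) − t(h−s+1). -/
open Polynomial

noncomputable section

variable {F : Type*} [Field F]

/-- Powers of the generalized operator: `(a∘)^i b = σ^i(b)·σ^{i-1}(a)⋯σ(a)·a`. -/
def opPow (σ : F → F) (a b : F) : ℕ → F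
  | 0 => b
  | i + 1 => σ (opPow σ a b i) * a

/-- Generalized operator evaluation of a (skew) polynomial: `f(b)_a = Σ_i f_i (a∘)^i b`. -/
def opEval (σ : F → F) (f : Polynomial F) (a b : F) : F :=
  ∑ i ∈ f.support, f.coeff i * opPow σ a b i

/-- σ-conjugacy: `b = σ(c)·a·c⁻¹` for some nonzero `c`. -/
def IsSkewConj (σ : F → F) (a b : F) : Prop :=
  ∃ c : F, c ≠ 0 ∧ σ c * a * c⁻¹ = b

/-- `rk_q`: the maximal number of `K`-linearly independent columns of a matrix over `F ⊇ K`,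
i.e. the `K`-dimension of the `K`-span of the columns. -/
def rankq (K : Type*) {F : Type*} [Field K] [Field F] [Algebra K F]
    {h c : ℕ} (M : Matrix (Fin h) (Fin c) F) : ℕ :=
  Module.finrank K (Submodule.span K (Set.range fun j => fun r => M r j))

/-- The `i`-th block of the `h`-folded linearized Reed–Solomon codeword for message `f`:
entry `(r, c)` is `f(β^{c·h + r})_{a_i}` (0-indexed). -/
def flrsWord {K F : Type*} [Field K] [Field F] [Algebra K F]
    (σ : F ≃ₐ[K] F) (β : F) {ℓ : ℕ} (h Ni : ℕ) (a : Fin ℓ → F)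
    (f : Polynomial F) (i : Fin ℓ) : Matrix (Fin h) (Fin Ni) F :=
  Matrix.of fun r c => opEval (⇑σ) f (a i) (β ^ ((c : ℕ) * h + (r : ℕ)))

/-! Write `S = (U | X_R)`, with `U` the Moore matrix of the code locators and `X_R` the Moore
matrices of the received word. As `R = C + E` and operator powers are additive,
`S = (U | X_C) + (0 | X_E)`. Since `deg f < k`, the `c`-th operator power of `f(β^r b)_a` is an
`F`-combination of the first `D` operator powers of `b` with coefficients independent of `b`
and `a`, so every column of `X_C` is a combination of columns of `U` and the first summand has
rank at most `D`. The row `((i, j), l)` of `X_E` is the image of the `j`-th column of `E_i` under a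
`K`-linear map depending only on `(i, l)`, so all rows lie in the `F`-span of
`∑ rk_q(E_i) · (h - s + 1) = t (h - s + 1)` vectors. Rank–nullity on the `D + s (D - k + 1)`
columns gives the bound on the kernel. -/

namespace Matrix

variable {R m n n₁ n₂ ι : Type*} [Field R]

theorem rank_add_le [Fintype n] (A B : Matrix m n R) : (A + B).rank ≤ A.rank + B.rank := by
  have hrange : LinearMap.range (A + B).mulVecLin ≤
      LinearMap.range A.mulVecLin ⊔ LinearMap.range B.mulVecLin := by
    rintro _ ⟨x, rfl⟩
    rw [mulVecLin_add]
    exact Submodule.add_mem_sup ⟨x, rfl⟩ ⟨x, rfl⟩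
  exact (Submodule.finrank_mono hrange).trans (Submodule.finrank_add_le_finrank_add_finrank _ _)

theorem rank_le_card_of_col_mem_span [Fintype n] [Fintype ι] (A : Matrix m n R) (v : ι → m → R)
    (hA : ∀ j, A.col j ∈ Submodule.span R (Set.range v)) : A.rank ≤ Fintype.card ι := by
  have := FiniteDimensional.span_of_finite R (Set.finite_range v)
  rw [rank_eq_finrank_span_cols]
  calc _ ≤ Module.finrank R (Submodule.span R (Set.range v)) :=
        Submodule.finrank_mono (Submodule.span_le.mpr (Set.range_subset_iff.mpr hA))
    _ ≤ Fintype.card ι := finrank_range_le_card v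

theorem rank_le_card_of_row_mem_span [Fintype m] [Fintype n] [Fintype ι] (A : Matrix m n R)
    (v : ι → n → R) (hA : ∀ i, A.row i ∈ Submodule.span R (Set.range v)) :
    A.rank ≤ Fintype.card ι := by
  rw [← rank_transpose]
  exact rank_le_card_of_col_mem_span Aᵀ v hA

theorem rank_fromCols_le_of_col_mem_span [Fintype n₁] [Fintype n₂] (A : Matrix m n₁ R)
    (B : Matrix m n₂ R) (hB : ∀ j, B.col j ∈ Submodule.span R (Set.range A.col)) :
    (fromCols A B).rank ≤ Fintype.card n₁ := by
  refine rank_le_card_of_col_mem_span _ A.col fun j => ?_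
  rcases j with j | j
  · exact Submodule.subset_span ⟨j, rfl⟩
  · exact hB j

theorem rank_fromCols_zero_left_le [Fintype n₁] [Fintype n₂] (B : Matrix m n₂ R) :
    (fromCols (0 : Matrix m n₁ R) B).rank ≤ B.rank := by
  classical
  have : fromCols (0 : Matrix m n₁ R) B = B * fromCols (0 : Matrix n₂ n₁ R) 1 := by
    rw [mul_fromCols, Matrix.mul_zero, Matrix.mul_one]
  rw [this]
  exact rank_mul_le_left _ _

end Matrix

section OpPow

variable {G : Type*} [FunLike G F F]

theorem opPow_add [AddHomClass G F F] (σ : G) (a b₁ b₂ : F) (n : ℕ) :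
    opPow σ a (b₁ + b₂) n = opPow σ a b₁ n + opPow σ a b₂ n := by
  induction n with
  | zero => rfl
  | succ n ih => simp only [opPow, ih, map_add, add_mul]

theorem opPow_sum [AddMonoidHomClass G F F] (σ : G) (a : F) {ι : Type*} (s : Finset ι)
    (b : ι → F) (n : ℕ) : opPow σ a (∑ x ∈ s, b x) n = ∑ x ∈ s, opPow σ a (b x) n :=
  map_sum (AddMonoidHom.mk' (opPow σ a · n) (opPow_add σ a · · n)) b s

theorem opPow_mul_left [MulHomClass G F F] (σ : G) (a x b : F) (n : ℕ) :
    opPow σ a (x * b) n = σ^[n] x * opPow σ a b n := by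
  induction n with
  | zero => rfl
  | succ n ih => simp only [opPow, ih, map_mul, Function.iterate_succ_apply', mul_assoc]

theorem opPow_opPow (σ : F → F) (a b : F) (m n : ℕ) :
    opPow σ a (opPow σ a b m) n = opPow σ a b (m + n) := by
  induction n with
  | zero => rfl
  | succ n ih => rw [← Nat.add_assoc, opPow, ih, opPow]

theorem opPow_opEval_mul [RingHomClass G F F] (σ : G) (f : F[X]) (a x b : F) (n : ℕ) :
    opPow σ a (opEval σ f a (x * b)) n
      = ∑ d ∈ f.support, σ^[n] (f.coeff d) * σ^[d + n] x * opPow σ a b (d + n) := by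
  rw [opEval, opPow_sum]
  refine Finset.sum_congr rfl fun d _ => ?_
  rw [opPow_mul_left, opPow_opPow, opPow_mul_left, mul_assoc]

variable {K : Type*} [Field K] [Algebra K F]

theorem opPow_smul [AlgHomClass G K F F] (σ : G) (a : F) (c : K) (b : F) (n : ℕ) :
    opPow σ a (c • b) n = c • opPow σ a b n := by
  have hc : σ^[n] (algebraMap K F c) = algebraMap K F c :=
    Function.iterate_fixed (AlgHomClass.commutes σ c) n
  rw [Algebra.smul_def, Algebra.smul_def, opPow_mul_left, hc]

variable (K) in
def opPowLinearMap [AlgHomClass G K F F] (σ : G) (a : F) (n : ℕ) : F →ₗ[K] F where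
  toFun b := opPow σ a b n
  map_add' b₁ b₂ := opPow_add σ a b₁ b₂ n
  map_smul' c b := opPow_smul σ a c b n

end OpPow

section RankQ

variable {K : Type*} [Field K] [Algebra K F]

theorem exists_span_eq_span_cols_of_rankq {h c : ℕ} (M : Matrix (Fin h) (Fin c) F) :
    ∃ w : Fin (rankq K M) → Fin h → F,
      Submodule.span K (Set.range w) = Submodule.span K (Set.range M.col) := by
  let W := Submodule.span K (Set.range M.col)
  have := FiniteDimensional.span_of_finite K (Set.finite_range M.col)
  let b : Module.Basis (Fin (rankq K M)) K W := Module.finBasis K W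
  refine ⟨W.subtype ∘ b, ?_⟩
  rw [Set.range_comp, ← Submodule.map_span, b.span_eq, Submodule.map_top,
    Submodule.range_subtype]

theorem rank_le_sum_rankq_mul_card {ι ρ κ : Type*} [Fintype ι] [Fintype ρ] [Fintype κ]
    {h n : ℕ} (E : ι → Matrix (Fin h) (Fin n) F) (Φ : ι → ρ → (Fin h → F) →ₗ[K] κ → F)
    (M : Matrix ((ι × Fin n) × ρ) κ F) (hM : ∀ i j l, M ((i, j), l) = Φ i l ((E i).col j)) :
    M.rank ≤ (∑ i, rankq K (E i)) * Fintype.card ρ := by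
  choose w hw using fun i => exists_span_eq_span_cols_of_rankq (K := K) (E i)
  let v : (Σ p : ι × ρ, Fin (rankq K (E p.1))) → κ → F := fun x => Φ x.1.1 x.1.2 (w x.1.1 x.2)
  have hrow : ∀ r, M.row r ∈ Submodule.span F (Set.range v) := by
    rintro ⟨⟨i, j⟩, l⟩
    have hcol : (E i).col j ∈ Submodule.span K (Set.range (w i)) :=
      hw i ▸ Submodule.subset_span ⟨j, rfl⟩
    have hmap : (Submodule.span K (Set.range (w i))).map (Φ i l) ≤
        Submodule.span K (Set.range v) := by
      rw [Submodule.map_span, Submodule.span_le]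
      rintro _ ⟨_, ⟨m, rfl⟩, rfl⟩
      exact Submodule.subset_span ⟨⟨(i, l), m⟩, rfl⟩
    rw [Matrix.row, hM]
    exact Submodule.span_le_restrictScalars K F _ (hmap (Submodule.mem_map_of_mem hcol))
  calc M.rank ≤ Fintype.card (Σ p : ι × ρ, Fin (rankq K (E p.1))) :=
        M.rank_le_card_of_row_mem_span v hrow
    _ = (∑ i, rankq K (E i)) * Fintype.card ρ := by
        simp [Fintype.card_sigma, Fintype.sum_prod_type, Finset.mul_sum,
          Nat.mul_comm _ (Fintype.card ρ)]

end RankQ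

section Interpolation

variable {ℓ Ni : ℕ}

/-- In the paper's notation `locatorMoore σ β a h (h - s + 1) D` is `M_D(p_0)_aᵀ` and
`receivedMoore σ a hsh R n` is `(M_n(p_1)_aᵀ | … | M_n(p_s)_aᵀ)`, its column `(r, c)` being
the `c`-th operator power of the `r`-th shifted window of the received word. -/
def locatorMoore (σ : F → F) (β : F) (a : Fin ℓ → F) (h L D : ℕ) :
    Matrix ((Fin ℓ × Fin Ni) × Fin L) (Fin D) F :=
  Matrix.of fun p e => opPow σ (a p.1.1) (β ^ ((p.1.2 : ℕ) * h + (p.2 : ℕ))) e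

def receivedMoore (σ : F → F) (a : Fin ℓ → F) {h s : ℕ} (hsh : s ≤ h)
    (W : Fin ℓ → Matrix (Fin h) (Fin Ni) F) (n : ℕ) :
    Matrix ((Fin ℓ × Fin Ni) × Fin (h - s + 1)) (Fin s × Fin n) F :=
  Matrix.of fun p rc =>
    opPow σ (a p.1.1) (W p.1.1 ⟨(p.2 : ℕ) + (rc.1 : ℕ), by omega⟩ p.1.2) rc.2

variable {K : Type*} [Field K] [Algebra K F]

theorem col_receivedMoore_flrsWord_mem_span (σ : F ≃ₐ[K] F) (β : F) (a : Fin ℓ → F)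
    {h s : ℕ} (hsh : s ≤ h) (f : F[X]) {n D : ℕ} (hfD : f.natDegree + n ≤ D)
    (rc : Fin s × Fin n) :
    (receivedMoore σ a hsh (flrsWord σ β h Ni a f) n).col rc
      ∈ Submodule.span F (Set.range (locatorMoore σ β a h (h - s + 1) D).col) := by
  obtain ⟨r, c⟩ := rc
  have hcol : (receivedMoore σ a hsh (flrsWord σ β h Ni a f) n).col (r, c)
      = ∑ d ∈ f.support, (σ^[c] (f.coeff d) * σ^[d + c] (β ^ (r : ℕ))) •
          fun p : (Fin ℓ × Fin Ni) × Fin (h - s + 1) =>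
            opPow σ (a p.1.1) (β ^ ((p.1.2 : ℕ) * h + (p.2 : ℕ))) (d + c) := by
    ext ⟨⟨i, j⟩, l⟩
    simp only [Matrix.col, Matrix.transpose_apply, receivedMoore, flrsWord, Matrix.of_apply,
      Finset.sum_apply, Pi.smul_apply, smul_eq_mul]
    rw [show β ^ ((j : ℕ) * h + ((l : ℕ) + (r : ℕ))) = β ^ (r : ℕ) * β ^ ((j : ℕ) * h + l) by
      ring, opPow_opEval_mul]
  rw [hcol]
  refine Submodule.sum_mem _ fun d hd =>
    Submodule.smul_mem _ _ (Submodule.subset_span ⟨⟨d + c, ?_⟩, rfl⟩)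
  have := le_natDegree_of_mem_supp d hd
  omega

theorem rank_receivedMoore_le {G : Type*} [FunLike G F F] [AlgHomClass G K F F] (σ : G)
    (a : Fin ℓ → F) {h s : ℕ} (hsh : s ≤ h) (E : Fin ℓ → Matrix (Fin h) (Fin Ni) F) (n : ℕ) :
    (receivedMoore σ a hsh E n).rank ≤ (∑ i, rankq K (E i)) * (h - s + 1) := by
  let Φ : Fin ℓ → Fin (h - s + 1) → (Fin h → F) →ₗ[K] Fin s × Fin n → F := fun i l =>
    LinearMap.pi fun rc => opPowLinearMap K σ (a i) rc.2 ∘ₗ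
      LinearMap.proj ⟨(l : ℕ) + (rc.1 : ℕ), by omega⟩
  simpa using rank_le_sum_rankq_mul_card E Φ _ fun i j l => rfl

end Interpolation

theorem stmt7 {K F : Type*} [Field K] [Field F] [Algebra K F]
    (σ : F ≃ₐ[K] F) (β : F) (ℓ h Ni s k t D : ℕ)
    (hsh : s ≤ h) (hkD : k ≤ D)
    (a : Fin ℓ → F)
    (f : Polynomial F) (hfdeg : f.natDegree < k)
    (E : Fin ℓ → Matrix (Fin h) (Fin Ni) F)
    (hE : ∑ i, rankq K (E i) = t)
    -- the received word `R = C + E`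
    (R : Fin ℓ → Matrix (Fin h) (Fin Ni) F)
    (hR : ∀ i, R i = flrsWord σ β h Ni a f i + E i)
    -- `S` is the interpolation matrix: rows indexed by the interpolation points
    -- `((i, j), l)`, columns by `Fin D ⊕ Fin s × Fin (D - k + 1)`, whose column
    -- groups are the transposed generalized Moore matrices of `p_0, p_1, …, p_s`
    (S : Matrix ((Fin ℓ × Fin Ni) × Fin (h - s + 1)) (Fin D ⊕ Fin s × Fin (D - k + 1)) F)
    (hS : ∀ (i : Fin ℓ) (j : Fin Ni) (l : Fin (h - s + 1)) (c : Fin D ⊕ Fin s × Fin (D - k + 1)),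
      S ((i, j), l) c = Sum.elim
        (fun cd : Fin D => opPow (⇑σ) (a i) (β ^ ((j : ℕ) * h + (l : ℕ))) (cd : ℕ))
        (fun rc : Fin s × Fin (D - k + 1) => opPow (⇑σ) (a i)
          (R i ⟨(l : ℕ) + (rc.1 : ℕ), by have := l.isLt; have := rc.1.isLt; omega⟩ j)
          (rc.2 : ℕ)) c) :
    S.rank ≤ D + t * (h - s + 1) ∧
    s * (D - k + 1) ≤ Module.finrank F (LinearMap.ker S.mulVecLin) + t * (h - s + 1) := by
  set U := locatorMoore (Ni := Ni) σ β a h (h - s + 1) D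
  set X := receivedMoore σ a hsh
  have hSeq : S = Matrix.fromCols U (X (flrsWord σ β h Ni a f) (D - k + 1))
      + Matrix.fromCols 0 (X E (D - k + 1)) := by
    have hRE : R = flrsWord σ β h Ni a f + E := funext hR
    ext ⟨⟨i, j⟩, l⟩ (c | rc)
    · simp [hS, U, locatorMoore]
    · simp [hS, X, receivedMoore, hRE, opPow_add]
  have hrank : S.rank ≤ D + t * (h - s + 1) := by
    calc S.rank ≤ (Matrix.fromCols U (X (flrsWord σ β h Ni a f) (D - k + 1))).rank
          + (Matrix.fromCols 0 (X E (D - k + 1))).rank := hSeq ▸ Matrix.rank_add_le _ _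
      _ ≤ D + t * (h - s + 1) := by
        gcongr
        · simpa using Matrix.rank_fromCols_le_of_col_mem_span _ _
            (col_receivedMoore_flrsWord_mem_span σ β a hsh f (by omega))
        · exact hE ▸ (Matrix.rank_fromCols_zero_left_le _).trans
            (rank_receivedMoore_le σ a hsh E _)
  have hnullity :
      S.rank + Module.finrank F (LinearMap.ker S.mulVecLin) = D + s * (D - k + 1) := by
    simpa [Matrix.rank, Fintype.card_sum] using LinearMap.finrank_range_add_finrank_ker S.mulVecLin
  exact ⟨hrank, by omega⟩
end
end

section
/- The number of solutions f ∈ F_{q^m}[x;σ]_{<k} of the FLRS root-finding system is at most q^{m(s−1)}: the root-finding matrix B has F_{q^m}-rank at least k−s+1, so its kernel has dimension at most s−1. -/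
/-! Restricting `B` to the rows of the nonzero polynomial `B_0^{(0)}` gives a lower-triangular
`k × k` matrix whose diagonal entry at `a` vanishes exactly when `σ^a(β)` is a root of
`B_0^{(0)}`; as these points are distinct, at most `s - 1` diagonal entries vanish. The nonzero
ones index a triangular minor with nonzero determinant, and the solution set of `B f = q` is
empty or a coset of the kernel. -/

open Finset Polynomial Matrix

theorem Polynomial.card_filter_eval_eq_zero_le {R ι : Type*} [CommRing R] [IsDomain R]
    [DecidableEq R] [Fintype ι] {p : R[X]} (hp : p ≠ 0) {f : ι → R} (hf : Function.Injective f) :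
    #{i | p.eval (f i) = 0} ≤ p.natDegree := by
  rw [← card_image_of_injective _ hf]
  refine card_le_degree_of_subset_roots fun x hx => ?_
  obtain ⟨i, hi, rfl⟩ := mem_image.mp (mem_def.mpr hx)
  exact (mem_roots hp).mpr (mem_filter.mp hi).2

theorem Matrix.IsLowerTriangular.card_diag_ne_zero_le_rank {n K : Type*} [Field K]
    [DecidableEq K] [Fintype n] [LinearOrder n] {A : Matrix n n K} (hA : A.IsLowerTriangular) :
    #{i | A i i ≠ 0} ≤ A.rank := by
  set S : Finset n := {i | A i i ≠ 0}
  let M := A.submatrix (fun i : S => (i : n)) (fun i : S => (i : n))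
  have hM : M.IsLowerTriangular := fun _ _ hij => hA hij
  have hdet : IsUnit M.det := by
    rw [det_of_isLowerTriangular M hM]
    exact isUnit_iff_ne_zero.mpr (prod_ne_zero_iff.mpr fun i _ => (mem_filter.mp i.2).2)
  calc #S = Fintype.card S := (Fintype.card_coe S).symm
    _ = M.rank := (rank_of_isUnit M ((isUnit_iff_isUnit_det M).mpr hdet)).symm
    _ ≤ A.rank := rank_submatrix_le A _ _

theorem AddMonoidHom.ncard_preimage_singleton_le {G H : Type*} [AddGroup G] [AddGroup H]
    (f : G →+ H) (y : H) : (f ⁻¹' {y}).ncard ≤ Nat.card f.ker := by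
  by_cases hy : y ∈ Set.range f
  · obtain ⟨a, rfl⟩ := hy
    exact (Nat.card_congr (f.fiberEquivKer a)).le
  · rw [Set.preimage_singleton_eq_empty.mpr hy, Set.ncard_empty]
    exact Nat.zero_le _

theorem Matrix.ncard_mulVec_eq_le {m n K : Type*} [Field K] [Fintype n]
    (A : Matrix m n K) (b : m → K) :
    {x | A *ᵥ x = b}.ncard ≤ Nat.card K ^ (Fintype.card n - A.rank) := by
  have hnullity : Module.finrank K (LinearMap.ker A.mulVecLin) = Fintype.card n - A.rank := by
    have hrank_nullity := LinearMap.finrank_range_add_finrank_ker A.mulVecLin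
    rw [Module.finrank_fintype_fun_eq_card] at hrank_nullity
    rw [Matrix.rank]
    omega
  calc {x | A *ᵥ x = b}.ncard ≤ Nat.card (LinearMap.ker A.mulVecLin) :=
        A.mulVecLin.toAddMonoidHom.ncard_preimage_singleton_le b
    _ = Nat.card K ^ (Fintype.card n - A.rank) := by
        rw [Module.natCard_eq_pow_finrank (K := K), hnullity]

theorem stmt8_general {F : Type*} [Field F] [Fintype F]
    (σ : F ≃+* F) (k s dI : ℕ) (hd : 0 < dI)
    (β : F)
    -- the evaluation points `σ^a(β)`, `a = 0,…,k−1`, are pairwise distinct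
    (hβ : Function.Injective fun a : Fin k => (σ ^ (a : ℕ)) β)
    -- the polynomials `B_0^{(u)}` of degree ≤ s−1, the first one nonzero
    (B0 : Fin dI → Polynomial F)
    (hB0ne : B0 ⟨0, hd⟩ ≠ 0)
    (hdeg : ∀ u, (B0 u).natDegree ≤ s - 1)
    -- the root-finding matrix `B`: block lower triangular with diagonal blocks
    -- `b_{0,a} = (σ^{-a}(B_0^{(u)}(σ^a(β))))_u`
    (B : Matrix (Fin k × Fin dI) (Fin k) F)
    (htri : ∀ (j : Fin k) (u : Fin dI) (c : Fin k), (j : ℕ) < (c : ℕ) → B (j, u) c = 0)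
    (hdiag : ∀ (a : Fin k) (u : Fin dI),
      B (a, u) a = (σ ^ (a : ℕ)).symm ((B0 u).eval ((σ ^ (a : ℕ)) β))) :
    -- `rk(B) ≥ k − s + 1`, …
    k ≤ B.rank + (s - 1) ∧
    -- … so the root-finding system has at most `q^{m(s−1)} = |F|^{s-1}` solutions
    ∀ qv : Fin k × Fin dI → F,
      Set.ncard {fv : Fin k → F | B.mulVec fv = qv} ≤ Fintype.card F ^ (s - 1) := by
  classical
  let A : Matrix (Fin k) (Fin k) F := B.submatrix (fun a => (a, ⟨0, hd⟩)) id
  have hA : A.IsLowerTriangular := fun i j hij => htri i _ j hij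
  have hzeros : #{a | A a a = 0} ≤ s - 1 := by
    have hdiag_eq_zero : ∀ a, A a a = 0 ↔ (B0 ⟨0, hd⟩).eval ((σ ^ (a : ℕ)) β) = 0 := by
      simp [A, hdiag]
    simp only [hdiag_eq_zero]
    exact (card_filter_eval_eq_zero_le hB0ne hβ).trans (hdeg _)
  have hrank : k ≤ B.rank + (s - 1) := by
    have hsplit := card_filter_add_card_filter_not (s := univ) (fun a => A a a = 0)
    rw [card_univ, Fintype.card_fin] at hsplit
    have hnonzeros := hA.card_diag_ne_zero_le_rank.trans (rank_submatrix_le B _ _)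
    simp only [ne_eq] at hnonzeros
    omega
  refine ⟨hrank, fun qv => (B.ncard_mulVec_eq_le qv).trans ?_⟩
  rw [Nat.card_eq_fintype_card, Fintype.card_fin]
  exact Nat.pow_le_pow_right Fintype.card_pos (by omega)

theorem stmt8 {F : Type*} [Field F] [Fintype F]
    (σ : F ≃+* F) (k s dI : ℕ) (hs1 : 1 ≤ s) (hd : 0 < dI)
    (β : F)
    -- the evaluation points `σ^a(β)`, `a = 0,…,k−1`, are pairwise distinct
    (hβ : Function.Injective fun a : Fin k => (σ ^ (a : ℕ)) β)
    -- the polynomials `B_0^{(u)}` of degree ≤ s−1, the first one nonzero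
    (B0 : Fin dI → Polynomial F)
    (hB0ne : B0 ⟨0, hd⟩ ≠ 0)
    (hdeg : ∀ u, (B0 u).natDegree ≤ s - 1)
    -- the root-finding matrix `B`: block lower triangular with diagonal blocks
    -- `b_{0,a} = (σ^{-a}(B_0^{(u)}(σ^a(β))))_u`
    (B : Matrix (Fin k × Fin dI) (Fin k) F)
    (htri : ∀ (j : Fin k) (u : Fin dI) (c : Fin k), (j : ℕ) < (c : ℕ) → B (j, u) c = 0)
    (hdiag : ∀ (a : Fin k) (u : Fin dI),
      B (a, u) a = (σ ^ (a : ℕ)).symm ((B0 u).eval ((σ ^ (a : ℕ)) β))) :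
    -- `rk(B) ≥ k − s + 1`, …
    k ≤ B.rank + (s - 1) ∧
    -- … so the root-finding system has at most `q^{m(s−1)} = |F|^{s-1}` solutions
    ∀ qv : Fin k × Fin dI → F,
      Set.ncard {fv : Fin k → F | B.mulVec fv = qv} ≤ Fintype.card F ^ (s - 1) :=
  stmt8_general σ k s dI hd β hβ B0 hB0ne hdeg B htri hdiag
end

section
/- If each of d_I independent random vectors, drawn uniformly from the set of codewords of a fixed Reed–Solomon code over F_{q^m} (length k, dimension s ≤ k), is collected as a row of a matrix, then the probability that some column of the matrix is all-zero is at most k·(k/q^m)^{d_I}. Consequently, under the heuristic uniformity assumption, the failure probability of the probabilistic unique FLRS decoder satisfies P(rk(B) < k) ≲ k·(k/q^m)^{d_I}. -/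
/-!
Union bound over the `k` evaluation points. A polynomial `∑ c_j X^j` vanishes at a fixed `β`
iff `c_0 = -∑_{j ≥ 1} c_j β^j`, so `dI` independent uniform ones all vanish at `β` with
probability exactly `q^{-dI}`. This gives the sharper bound `k / q^{dI}`, and
`k / q^{dI} ≤ k · (k/q)^{dI}` as `k ≥ 1`.
-/

open Finset

theorem Fintype.card_subtype_exists_le {ι α : Type*} [Fintype ι] [Fintype α] [DecidableEq α]
    (p : ι → α → Prop) [∀ i, DecidablePred (p i)] [DecidablePred fun x => ∃ i, p i x] :
    Fintype.card {x // ∃ i, p i x} ≤ ∑ i, Fintype.card {x // p i x} := by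
  simp only [Fintype.card_subtype]
  refine le_trans (card_le_card fun x hx => ?_) card_biUnion_le
  obtain ⟨i, hi⟩ := (mem_filter_univ x).1 hx
  exact mem_biUnion.2 ⟨i, mem_univ i, (mem_filter_univ x).2 hi⟩

section RootCounting

variable {F : Type*} [Field F] [Fintype F] [DecidableEq F]

def vanishingAtEquivTail (n : ℕ) (β : F) :
    {c : Fin (n + 1) → F // ∑ j, c j * β ^ (j : ℕ) = 0} ≃ (Fin n → F) where
  toFun c := Fin.tail c.1
  invFun t := ⟨Fin.cons (-∑ i, t i * β ^ (i + 1 : ℕ)) t, by simp [Fin.sum_univ_succ]⟩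
  left_inv := by
    rintro ⟨c, hc⟩
    refine Subtype.ext (Eq.trans ?_ (Fin.cons_self_tail c))
    rw [Fin.sum_univ_succ] at hc
    simp only [Fin.val_zero, pow_zero, mul_one, Fin.val_succ] at hc
    show Fin.cons (-∑ i, Fin.tail c i * β ^ (i + 1 : ℕ)) (Fin.tail c) = _
    congr 1
    simp only [Fin.tail]
    linear_combination -hc
  right_inv t := Fin.tail_cons _ _

theorem card_vanishingAt (n : ℕ) (β : F) :
    Fintype.card {c : Fin (n + 1) → F // ∑ j, c j * β ^ (j : ℕ) = 0} = Fintype.card F ^ n := by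
  simp [Fintype.card_congr (vanishingAtEquivTail n β)]

theorem card_forall_vanishingAt {κ : Type*} [Fintype κ] [DecidableEq κ] (n : ℕ) (β : F) :
    Fintype.card {g : κ → Fin (n + 1) → F // ∀ u, ∑ j, g u j * β ^ (j : ℕ) = 0} =
      (Fintype.card F ^ n) ^ Fintype.card κ := by
  rw [Fintype.card_congr (Equiv.subtypePiEquivPi
      (p := fun _ (c : Fin (n + 1) → F) => ∑ j, c j * β ^ (j : ℕ) = 0)),
    Fintype.card_pi, card_vanishingAt]
  simp

theorem card_exists_common_root_le {ι κ : Type*} [Fintype ι] [Fintype κ] [DecidableEq κ]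
    (n : ℕ) (x : ι → F) :
    Fintype.card {g : κ → Fin (n + 1) → F // ∃ a, ∀ u, ∑ j, g u j * x a ^ (j : ℕ) = 0} ≤
      Fintype.card ι * (Fintype.card F ^ n) ^ Fintype.card κ := by
  refine (Fintype.card_subtype_exists_le _).trans ?_
  simp [card_forall_vanishingAt]

end RootCounting

theorem stmt10_general {F : Type*} [Field F] [Fintype F] [DecidableEq F]
    (k s dI : ℕ) (hs1 : 1 ≤ s) (hk1 : 1 ≤ k)
    -- `k` pairwise distinct evaluation points of a Reed–Solomon code of
    -- length `k` and dimension `s`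
    (x : Fin k → F) :
    -- a uniformly random tuple of `dI` codewords (given by coefficient vectors
    -- `g u : Fin s → F` of the message polynomials) has some all-zero column,
    -- i.e. a common root among the `k` evaluation points, with probability at
    -- most `k·(k/q^m)^{dI}`; consequently the heuristic failure probability of
    -- the probabilistic unique FLRS decoder obeys the same bound
    (Fintype.card {g : Fin dI → Fin s → F //
        ∃ a : Fin k, ∀ u, ∑ j, g u j * x a ^ (j : ℕ) = 0} : ℚ) /
      ((Fintype.card F : ℚ) ^ (s * dI)) ≤
      (k : ℚ) * ((k : ℚ) / (Fintype.card F : ℚ)) ^ dI := by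
  obtain ⟨n, rfl⟩ := Nat.exists_eq_add_of_le' hs1
  have hcount := card_exists_common_root_le (κ := Fin dI) n x
  simp only [Fintype.card_fin] at hcount
  have hk : (1 : ℚ) ≤ k := by exact_mod_cast hk1
  calc _ ≤ (k * ((Fintype.card F : ℚ) ^ n) ^ dI : ℚ) / (Fintype.card F : ℚ) ^ ((n + 1) * dI) := by
        gcongr; exact_mod_cast hcount
    _ = k / (Fintype.card F : ℚ) ^ dI := by
        rw [add_mul, one_mul, pow_add, pow_mul]; field_simp
    _ ≤ k * (k / Fintype.card F) ^ dI := by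
        rw [div_pow, ← mul_div_assoc]
        gcongr
        exact le_mul_of_one_le_right (by positivity) (one_le_pow₀ hk)

theorem stmt10 {F : Type*} [Field F] [Fintype F] [DecidableEq F]
    (k s dI : ℕ) (hs1 : 1 ≤ s) (hsk : s ≤ k) (hk1 : 1 ≤ k) (hdI : 1 ≤ dI)
    -- `k` pairwise distinct evaluation points of a Reed–Solomon code of
    -- length `k` and dimension `s`
    (x : Fin k → F) (hx : Function.Injective x) :
    -- a uniformly random tuple of `dI` codewords (given by coefficient vectors
    -- `g u : Fin s → F` of the message polynomials) has some all-zero column,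
    -- i.e. a common root among the `k` evaluation points, with probability at
    -- most `k·(k/q^m)^{dI}`; consequently the heuristic failure probability of
    -- the probabilistic unique FLRS decoder obeys the same bound
    (Fintype.card {g : Fin dI → Fin s → F //
        ∃ a : Fin k, ∀ u, ∑ j, g u j * x a ^ (j : ℕ) = 0} : ℚ) /
      ((Fintype.card F : ℚ) ^ (s * dI)) ≤
      (k : ℚ) * ((k : ℚ) / (Fintype.card F : ℚ)) ^ dI :=
  stmt10_general k s dI hs1 hk1 x
end

section
/- For positive integers N, h, s, k, μ with 1 ≤ s ≤ h, setting D = ⌈(N(h−s+1)+s(k−1)+μ)/(s+1)⌉ guarantees both that the interpolation solution space has dimension d_I ≥ s(D−k+1) − t(h−s+1) ≥ μ and that D ≤ (N−t)(h−s+1), whenever t ≤ (s/(s+1))·((N(h−s+1)−k+1)/(h−s+1)) − μ/((s+1)(h−s+1)). -/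
/-!
Write `q = h - s + 1 > 0`. Clearing the denominators `(s + 1) q` in the bound on `t` gives
`t (s + 1) q ≤ s (N q - k + 1) - μ`, and the choice of `D` gives `N q + s (k - 1) + μ ≤ (s + 1) D`.
Both claims are linear consequences of these two inequalities; for the degree condition one
first gets `(N q + s (k - 1) + μ) / (s + 1) ≤ (N - t) q`, and since `(N - t) q` is an integer
this survives taking the ceiling.
-/

theorem natCast_ceil_le_intCast {R : Type*} [Field R] [LinearOrder R] [IsStrictOrderedRing R]
    [FloorRing R] {a : R} {z : ℤ} (ha : 0 ≤ a) (h : a ≤ z) : (⌈a⌉₊ : R) ≤ z := by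
  rw [natCast_ceil_eq_intCast_ceil ha]
  exact_mod_cast Int.ceil_le.mpr h

section DecodingRadius

variable {K : Type*} [Field K] [LinearOrder K] [IsStrictOrderedRing K] {N q s k t μ D : K}

theorem radius_mul_le_of_le (hq : 0 < q) (hs : 0 ≤ s)
    (ht : t ≤ s / (s + 1) * ((N * q - k + 1) / q) - μ / ((s + 1) * q)) :
    t * (s + 1) * q ≤ s * (N * q - k + 1) - μ := by
  have hsq : 0 < (s + 1) * q := by positivity
  calc t * (s + 1) * q = t * ((s + 1) * q) := by ring
    _ ≤ (s / (s + 1) * ((N * q - k + 1) / q) - μ / ((s + 1) * q)) * ((s + 1) * q) :=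
        mul_le_mul_of_nonneg_right ht hsq.le
    _ = s * (N * q - k + 1) - μ := by field_simp

theorem interpolation_dim_ge (hs : 0 ≤ s) (hrad : t * (s + 1) * q ≤ s * (N * q - k + 1) - μ)
    (hD : (N * q + s * (k - 1) + μ) / (s + 1) ≤ D) :
    t * q + μ ≤ s * (D - k + 1) := by
  have hs1 : 0 < s + 1 := by positivity
  rw [div_le_iff₀ hs1] at hD
  refine le_of_mul_le_mul_right ?_ hs1
  nlinarith [mul_le_mul_of_nonneg_left hD hs]

theorem ceil_arg_le_degree_bound (hs : 0 ≤ s)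
    (hrad : t * (s + 1) * q ≤ s * (N * q - k + 1) - μ) :
    (N * q + s * (k - 1) + μ) / (s + 1) ≤ (N - t) * q := by
  rw [div_le_iff₀ (by positivity)]
  linarith

end DecodingRadius

theorem stmt11_general (N h s k t D μ : ℕ) (hsh : s ≤ h) (hk1 : 1 ≤ k)
    -- `D = ⌈(N(h−s+1)+s(k−1)+μ)/(s+1)⌉`
    (hD : D = ⌈((N : ℚ) * ((h : ℚ) - s + 1) + s * ((k : ℚ) - 1) + μ) / ((s : ℚ) + 1)⌉₊)
    -- `t ≤ (s/(s+1))·((N(h−s+1)−k+1)/(h−s+1)) − μ/((s+1)(h−s+1))`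
    (ht : (t : ℚ) ≤ ((s : ℚ) / (s + 1)) *
        (((N : ℚ) * ((h : ℚ) - s + 1) - k + 1) / ((h : ℚ) - s + 1)) -
      (μ : ℚ) / (((s : ℚ) + 1) * ((h : ℚ) - s + 1))) :
    -- the interpolation solution space has dimension
    -- `d_I ≥ s(D−k+1) − t(h−s+1) ≥ μ` …
    (t : ℚ) * ((h : ℚ) - s + 1) + μ ≤ (s : ℚ) * ((D : ℚ) - k + 1) ∧
    -- … and the degree condition `D ≤ (N−t)(h−s+1)` holds
    (D : ℚ) ≤ ((N : ℚ) - t) * ((h : ℚ) - s + 1) := by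
  have hq : (0 : ℚ) < h - s + 1 := by
    have : (s : ℚ) ≤ h := by exact_mod_cast hsh
    linarith
  have hs : (0 : ℚ) ≤ s := s.cast_nonneg
  have hrad := radius_mul_le_of_le hq hs ht
  have hceil := hD ▸ Nat.le_ceil _
  refine ⟨interpolation_dim_ge hs hrad hceil, ?_⟩
  have hk : (0 : ℚ) ≤ k - 1 := by
    rw [sub_nonneg]
    exact_mod_cast hk1
  have hz : (((N - t) * (h - s + 1) : ℤ) : ℚ) = ((N : ℚ) - t) * ((h : ℚ) - s + 1) := by
    push_cast
    ring
  rw [hD, ← hz]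
  exact natCast_ceil_le_intCast (by positivity) (hz ▸ ceil_arg_le_degree_bound hs hrad)

theorem stmt11 (N h s k t D μ : ℕ) (hs1 : 1 ≤ s) (hsh : s ≤ h) (hk1 : 1 ≤ k)
    (hμ : 1 ≤ μ) (hkn : k ≤ N * h)
    -- `D = ⌈(N(h−s+1)+s(k−1)+μ)/(s+1)⌉`
    (hD : D = ⌈((N : ℚ) * ((h : ℚ) - s + 1) + s * ((k : ℚ) - 1) + μ) / ((s : ℚ) + 1)⌉₊)
    -- `t ≤ (s/(s+1))·((N(h−s+1)−k+1)/(h−s+1)) − μ/((s+1)(h−s+1))`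
    (ht : (t : ℚ) ≤ ((s : ℚ) / (s + 1)) *
        (((N : ℚ) * ((h : ℚ) - s + 1) - k + 1) / ((h : ℚ) - s + 1)) -
      (μ : ℚ) / (((s : ℚ) + 1) * ((h : ℚ) - s + 1))) :
    -- the interpolation solution space has dimension
    -- `d_I ≥ s(D−k+1) − t(h−s+1) ≥ μ` …
    (t : ℚ) * ((h : ℚ) - s + 1) + μ ≤ (s : ℚ) * ((D : ℚ) - k + 1) ∧
    -- … and the degree condition `D ≤ (N−t)(h−s+1)` holds
    (D : ℚ) ≤ ((N : ℚ) - t) * ((h : ℚ) - s + 1) :=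
  stmt11_general N h s k t D μ hsh hk1 hD ht
end
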